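/- arXiv:1212.2314 — 2 statements merged into one kernel-verified Lean document; each statement's English description precedes it below -/
import Mathlib

section
/- If Ha is a minimal tree projection of H1 w.r.t. H2, then nodes(Ha) = nodes(H1), i.e., minimal tree projections contain no nodes that do not occur in H1. -/
/-- A hypergraph, identified (as in the paper) with its finite set of
finite hyperedges; its nodes are the vertices occurring in some hyperedge. -/
structure FinHypergraph (α : Type*) where
  edges : Finset (Finset α)

namespace FinHypergraph

variable {α : Type*}

/-- The set of nodes of a hypergraph. -/
def nodes (H : FinHypergraph α) : Set α := {x | ∃ h ∈ H.edges, x ∈ h}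

/-- `H1 ≤ H2`: every hyperedge of `H1` is contained in some hyperedge of `H2`. -/
def HLe (H1 H2 : FinHypergraph α) : Prop := ∀ h1 ∈ H1.edges, ∃ h2 ∈ H2.edges, h1 ⊆ h2

/-- `H` is contained in `H'`. -/
def Contained (H H' : FinHypergraph α) : Prop :=
  ∀ h ∈ H.edges, h ∉ H'.edges → ∃ h' ∈ H'.edges, h' ∉ H.edges ∧ h ⊆ h'

/-- `H` is properly contained in `H'`. -/
def ProperlyContained (H H' : FinHypergraph α) : Prop := H.Contained H' ∧ H ≠ H'

/-- A hypergraph is reduced if no hyperedge is a proper subset of another one. -/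
def Reduced (H : FinHypergraph α) : Prop := ∀ h ∈ H.edges, ∀ h' ∈ H.edges, ¬ h ⊂ h'

end FinHypergraph

/-- The type of hyperedges of `H`. -/
abbrev Hyperedge {α : Type*} (H : FinHypergraph α) := {h : Finset α // h ∈ H.edges}

/-- A join tree for a hypergraph `H`: a tree whose vertices are the hyperedges of `H`
such that, for every node `X`, the hyperedges containing `X` induce a connected subtree. -/
structure JoinTree {α : Type*} (H : FinHypergraph α) where
  T : SimpleGraph (Hyperedge H)
  isTree : T.IsTree
  node_connected : ∀ X : α, (T.induce {h : Hyperedge H | X ∈ h.1}).Preconnected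

/-- A hypergraph is acyclic iff it has a join tree. -/
def FinHypergraph.Acyclic {α : Type*} (H : FinHypergraph α) : Prop := Nonempty (JoinTree H)

/-- `Ha` is a tree projection of `H1` w.r.t. `H2`. -/
def IsTreeProjection {α : Type*} (H1 H2 Ha : FinHypergraph α) : Prop :=
  Ha.Acyclic ∧ H1.HLe Ha ∧ Ha.HLe H2

/-- `Ha` is a minimal tree projection of `H1` w.r.t. `H2`. -/
def IsMinimalTreeProjection {α : Type*} (H1 H2 Ha : FinHypergraph α) : Prop :=
  IsTreeProjection H1 H2 Ha ∧
  ∀ Ha' : FinHypergraph α, IsTreeProjection H1 H2 Ha' → ¬ Ha'.ProperlyContained Ha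

namespace FinHypergraph

variable {α : Type*}

/-- `X` is `[V]`-adjacent to `Y`: some hyperedge contains both outside of `V`. -/
def Adj (H : FinHypergraph α) (V : Set α) (X Y : α) : Prop :=
  ∃ h ∈ H.edges, X ∈ h ∧ Y ∈ h ∧ X ∉ V ∧ Y ∉ V

/-- There is a `[V]`-path from `X` to `Y`. -/
def VPath (H : FinHypergraph α) (V : Set α) : α → α → Prop :=
  Relation.ReflTransGen (H.Adj V)

/-- The set `W` is `[V]`-connected. -/
def VConnected (H : FinHypergraph α) (V W : Set α) : Prop :=
  ∀ X ∈ W, ∀ Y ∈ W, H.VPath V X Y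

/-- `C` is a `[V]`-component of `H`: a maximal `[V]`-connected nonempty subset
of `nodes(H) \ V`. -/
def IsComponent (H : FinHypergraph α) (V C : Set α) : Prop :=
  C.Nonempty ∧ C ⊆ H.nodes \ V ∧ H.VConnected V C ∧
  ∀ C' : Set α, C ⊆ C' → C' ⊆ H.nodes \ V → H.VConnected V C' → C' = C

/-- The frontier `Fr(C,H)`: the union of all hyperedges meeting `C`. -/
def Fr (H : FinHypergraph α) (C : Set α) : Set α :=
  {x | ∃ h ∈ H.edges, x ∈ h ∧ ∃ y ∈ C, y ∈ h}

/-- The border `∂(C,H) = Fr(C,H) \ C`. -/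
def border (H : FinHypergraph α) (C : Set α) : Set α := H.Fr C \ C

/-- `X` `[V]`-touches the set `W`: `X` is `[∅]`-adjacent to some node `Z` from which
there is a `[V]`-path to some node of `W`. -/
def Touches (H : FinHypergraph α) (V : Set α) (X : α) (W : Set α) : Prop :=
  ∃ Z : α, H.Adj ∅ X Z ∧ ∃ Y ∈ W, H.VPath V Z Y

end FinHypergraph

namespace JoinTree

variable {α : Type*} {H : FinHypergraph α}

/-- The vertices of the subtree rooted at `h_s` when the join tree is rooted at
(the side of) `h_r`, for adjacent vertices `h_r`, `h_s`. -/
def subtreeVerts (JT : JoinTree H) (h_r h_s : Hyperedge H) : Set (Hyperedge H) :=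
  {v | JT.T.dist v h_s < JT.T.dist v h_r}

/-- The nodes occurring in the vertices of the subtree rooted at `h_s` (w.r.t. `h_r`). -/
def subtreeNodes (JT : JoinTree H) (h_r h_s : Hyperedge H) : Set α :=
  {x | ∃ v ∈ JT.subtreeVerts h_r h_s, x ∈ v.1}

/-- `h_s` is a child of `h_r` in the join tree rooted at `root`. -/
def IsChild (JT : JoinTree H) (root h_r h_s : Hyperedge H) : Prop :=
  JT.T.Adj h_r h_s ∧ JT.T.dist root h_r < JT.T.dist root h_s

end JoinTree

/-- The sub-hypergraph of `H1` induced by the node set `N` is `[∅]`-connected. -/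
def InducedConn {α : Type*} (H1 : FinHypergraph α) (N : Set α) : Prop :=
  ∀ X ∈ N, ∀ Y ∈ N,
    Relation.ReflTransGen
      (fun a b => a ∈ N ∧ b ∈ N ∧ ∃ h ∈ H1.edges, a ∈ h ∧ b ∈ h) X Y

/-- A join tree of `Ha` is `H1`-connected. -/
def JoinTree.IsConnectedFor {α : Type*} {Ha : FinHypergraph α} (JT : JoinTree Ha)
    (H1 : FinHypergraph α) : Prop :=
  ∀ h_r h_s : Hyperedge Ha, JT.T.Adj h_r h_s → InducedConn H1 (JT.subtreeNodes h_r h_s)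

/-- `C` is the component `C⊤(h)` associated with vertex `h` of the join tree rooted at
`root`: conventionally `nodes(H1)` for the root, and otherwise the unique
`[h_p]`-component of `H1` (for `h_p` the parent of `h`) determined by the subtree at `h`. -/
def CtopAt {α : Type*} (H1 : FinHypergraph α) {Ha : FinHypergraph α} (JT : JoinTree Ha)
    (root h : Hyperedge Ha) (C : Set α) : Prop :=
  (h = root ∧ C = H1.nodes) ∨
  ∃ h_p : Hyperedge Ha, JT.IsChild root h_p h ∧ H1.IsComponent (h_p.1 : Set α) C ∧
    JT.subtreeNodes h_p h = C ∪ ((h.1 : Set α) ∩ (h_p.1 : Set α))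

/-- The join tree `JT` of `Ha`, rooted at `root`, is an `H1`-component tree. -/
def JoinTree.IsComponentTreeFor {α : Type*} {Ha : FinHypergraph α} (JT : JoinTree Ha)
    (H1 : FinHypergraph α) (root : Hyperedge Ha) : Prop :=
  (∀ h_r h_s : Hyperedge Ha, JT.IsChild root h_r h_s →
    (∃! C : Set α, H1.IsComponent (h_r.1 : Set α) C ∧
      JT.subtreeNodes h_r h_s = C ∪ ((h_s.1 : Set α) ∩ (h_r.1 : Set α))) ∧
    (∀ C : Set α, H1.IsComponent (h_r.1 : Set α) C →
      JT.subtreeNodes h_r h_s = C ∪ ((h_s.1 : Set α) ∩ (h_r.1 : Set α)) →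
      ((h_s.1 : Set α) ∩ C).Nonempty ∧ (h_s.1 : Set α) ⊆ H1.Fr C)) ∧
  (∀ h_r : Hyperedge Ha, ∀ Ctop : Set α, CtopAt H1 JT root h_r Ctop →
    ∀ C_r : Set α, H1.IsComponent (h_r.1 : Set α) C_r → C_r ⊆ Ctop →
    ∃! h_s : Hyperedge Ha, JT.IsChild root h_r h_s ∧
      JT.subtreeNodes h_r h_s = C_r ∪ ((h_s.1 : Set α) ∩ (h_r.1 : Set α)))

/-! ### The Robber and Captain game -/

/-- A position for the Captain: a set of nodes included in some hyperedge of `H2`. -/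
def IsPosition {α : Type*} (H2 : FinHypergraph α) (M : Set α) : Prop :=
  ∃ h2 ∈ H2.edges, M ⊆ (h2 : Set α)

/-- A configuration of the game `R&C(H1,H2)`. -/
def IsConfig {α : Type*} (H1 H2 : FinHypergraph α) (M C : Set α) : Prop :=
  IsPosition H2 M ∧ (H1.IsComponent M C ∨ C = ∅ ∨ (M = ∅ ∧ C = H1.nodes))

/-- `C_j` is an `[(M_i,C_i),M_j]`-escape component: an `[M_j]`-component of `H1`
such that `C_i ∪ C_j` is `[M_i ∩ M_j]`-connected. -/
def EscapeComp {α : Type*} (H1 : FinHypergraph α) (M_i C_i M_j C_j : Set α) : Prop :=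
  H1.IsComponent M_j C_j ∧ H1.VConnected (M_i ∩ M_j) (C_i ∪ C_j)

/-- The escape door `ED((M_i,C),M') = ∂(C,H1) \ M'` (it only depends on `C` and `M'`). -/
def escapeDoor {α : Type*} (H1 : FinHypergraph α) (C M' : Set α) : Set α :=
  H1.border C \ M'

/-- `σ` is a strategy for the Captain in `R&C(H1,H2)`. -/
def IsStrategy {α : Type*} (H1 H2 : FinHypergraph α) (σ : Set α → Set α → Set α) : Prop :=
  ∀ M C : Set α, IsConfig H1 H2 M C → C ≠ ∅ →
    IsPosition H2 (σ M C) ∧ σ M C ⊆ H1.Fr C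

/-- One step of the game played according to `σ`: from configuration `p` the Captain
moves to `σ p.1 p.2`, and the Robber either selects an escape component or is captured. -/
def GameStep {α : Type*} (H1 : FinHypergraph α) (σ : Set α → Set α → Set α)
    (p q : Set α × Set α) : Prop :=
  p.2 ≠ ∅ ∧ q.1 = σ p.1 p.2 ∧
    (EscapeComp H1 p.1 p.2 q.1 q.2 ∨
      ((∀ C : Set α, ¬ EscapeComp H1 p.1 p.2 q.1 C) ∧ q.2 = ∅))

/-- `p` is a vertex of the game tree `T(σ)` (reachable from the root `(∅, nodes(H1))`). -/
def InGameTree {α : Type*} (H1 : FinHypergraph α) (σ : Set α → Set α → Set α)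
    (p : Set α × Set α) : Prop :=
  Relation.ReflTransGen (GameStep H1 σ) (∅, H1.nodes) p

/-- `σ` is winning: the game tree `T(σ)` is finite, i.e., there is no infinite play. -/
def Winning {α : Type*} (H1 : FinHypergraph α) (σ : Set α → Set α → Set α) : Prop :=
  ¬ ∃ f : ℕ → Set α × Set α, f 0 = (∅, H1.nodes) ∧ ∀ n, GameStep H1 σ (f n) (f (n + 1))

/-- `M_j` is a monotone move in `(M_i, C_i)`. -/
def MonotoneMove {α : Type*} (H1 : FinHypergraph α) (M_i C_i M_j : Set α) : Prop :=
  ∀ C : Set α, EscapeComp H1 M_i C_i M_j C → C ⊆ C_i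

/-- `σ` is a monotone strategy. -/
def MonotoneStrategy {α : Type*} (H1 : FinHypergraph α) (σ : Set α → Set α → Set α) : Prop :=
  ∀ p q : Set α × Set α, InGameTree H1 σ p → GameStep H1 σ p q →
    MonotoneMove H1 p.1 p.2 q.1


/-! Restricting every hyperedge of a tree projection `Ha` to the nodes of `H1` and keeping the
maximal restrictions gives again a tree projection: the join tree of `Ha` keeps the running
intersection property for the restricted labels, and contracting its edges `uv` with
`ℓ u ⊆ ℓ v` turns it into a join tree of the reduced hypergraph. If `Ha` had a node outside
`H1`, this hypergraph would be properly contained in `Ha`, contradicting minimality. -/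

namespace SimpleGraph

variable {α V W : Type*} {G : SimpleGraph V} {G' : SimpleGraph W}

theorem Reachable.map_of_adj (f : V → W) (hf : ∀ x y, G.Adj x y → f x = f y ∨ G'.Adj (f x) (f y))
    {x y : V} (h : G.Reachable x y) : G'.Reachable (f x) (f y) := by
  obtain ⟨p⟩ := h
  induction p with
  | nil => rfl
  | cons hadj _ ih =>
    rcases hf _ _ hadj with heq | hadj'
    · exact heq ▸ ih
    · exact hadj'.reachable.trans ih

theorem Preconnected.map_of_adj (hG : G.Preconnected) (f : V → W) (hsurj : Function.Surjective f)
    (hf : ∀ x y, G.Adj x y → f x = f y ∨ G'.Adj (f x) (f y)) : G'.Preconnected := by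
  intro a b
  obtain ⟨x, rfl⟩ := hsurj a
  obtain ⟨y, rfl⟩ := hsurj b
  exact (hG x y).map_of_adj f hf

theorem eq_or_map_adj (f : V → W) {x y : V} (h : G.Adj x y) :
    f x = f y ∨ (G.map f).Adj (f x) (f y) :=
  or_iff_not_imp_left.2 fun hne => ⟨hne, x, y, h, rfl, rfl⟩

theorem IsTree.map {T : SimpleGraph V} (hT : T.IsTree) {f : V → W} (hsurj : Function.Surjective f)
    (hfib : ∀ w, (T.induce (f ⁻¹' {w})).Preconnected) : (T.map f).IsTree := by
  have : Nonempty V := hT.connected.nonempty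
  have : Nonempty W := this.map f
  have hconn : (T.map f).Connected :=
    ⟨hT.connected.preconnected.map_of_adj f hsurj fun _ _ => eq_or_map_adj f⟩
  refine isTree_iff_minimal_connected.2 ⟨hconn, fun G hG hle a b hab => ?_⟩
  -- Pull `G` back to the subgraph `Ĝ ≤ T` of edges inside a fibre or over an edge of `G`;
  -- it is connected, so it is all of `T` by minimality of the tree `T`.
  let Ĝ : SimpleGraph V :=
    { Adj x y := T.Adj x y ∧ (f x = f y ∨ G.Adj (f x) (f y))
      symm := ⟨fun _ _ h => ⟨h.1.symm, h.2.imp Eq.symm fun h' => h'.symm⟩⟩ }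
  have hfibĜ : ∀ x y, f x = f y → Ĝ.Reachable x y := by
    intro x y hxy
    have hr := hfib (f y) ⟨x, hxy⟩ ⟨y, rfl⟩
    exact hr.map_of_adj (G' := Ĝ) Subtype.val fun a b h =>
      Or.inr ⟨h, Or.inl (a.2.trans b.2.symm)⟩
  have hĜ : Ĝ.Connected := by
    refine ⟨fun x y => ?_⟩
    suffices ∀ a b, G.Reachable a b → ∀ x y, f x = a → f y = b → Ĝ.Reachable x y from
      this _ _ (hG.preconnected (f x) (f y)) x y rfl rfl
    intro a b hab
    rw [reachable_iff_reflTransGen] at hab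
    induction hab with
    | refl => exact fun x y hx hy => hfibĜ x y (hx.trans hy.symm)
    | tail _ hcd ih =>
      intro x z hx hz
      obtain ⟨-, y, y', hyy', rfl, rfl⟩ := hle hcd
      exact (ih x y hx rfl).trans
        ((Adj.reachable (G := Ĝ) ⟨hyy', Or.inr hcd⟩).trans (hfibĜ y' z hz.symm))
  have hTĜ : T ≤ Ĝ := (isTree_iff_minimal_connected.1 hT).2 hĜ fun _ _ h => h.1
  obtain ⟨x, y, hxy, rfl, rfl⟩ := hab.2
  exact (hTĜ hxy).2.resolve_left hab.1

/-- For a join tree `T`, `T.RunningIntersection Subtype.val` is its defining property. -/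
def RunningIntersection (T : SimpleGraph V) (ℓ : V → Finset α) : Prop :=
  ∀ X : α, (T.induce {b | X ∈ ℓ b}).Preconnected

variable {T : SimpleGraph V} {ℓ : V → Finset α}

theorem RunningIntersection.map (hℓ : T.RunningIntersection ℓ) {f : V → W} {ℓ' : W → Finset α}
    (hle : ∀ x, ℓ x ⊆ ℓ' (f x)) (hsec : ∀ a, ∃ x, f x = a ∧ ℓ' a ⊆ ℓ x) :
    (T.map f).RunningIntersection ℓ' := by
  intro X
  refine (hℓ X).map_of_adj (fun x => ⟨f x, hle x x.2⟩) ?_ fun x y h => ?_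
  · rintro ⟨a, ha⟩
    obtain ⟨x, rfl, hx⟩ := hsec a
    exact ⟨⟨x, hx ha⟩, rfl⟩
  · exact (eq_or_map_adj f h).imp Subtype.ext id

open Classical in
theorem RunningIntersection.filter (hℓ : T.RunningIntersection ℓ) (S : Set α) :
    T.RunningIntersection fun b => (ℓ b).filter (· ∈ S) := by
  intro X
  by_cases hX : X ∈ S
  · have hset : {b | X ∈ (ℓ b).filter (· ∈ S)} = {b | X ∈ ℓ b} := by
      ext b
      simp [hX]
    rw [hset]
    exact hℓ X
  · rintro ⟨a, ha⟩
    exact absurd (Finset.mem_filter.1 ha).2 hX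

theorem RunningIntersection.exists_adj_subset (hT : T.IsTree) (hℓ : T.RunningIntersection ℓ)
    {a b : V} (hab : a ≠ b) (hsub : ℓ a ⊆ ℓ b) : ∃ w, T.Adj a w ∧ ℓ a ⊆ ℓ w := by
  classical
  obtain ⟨p, -, hp⟩ := hT.existsUnique_path a b
  cases p with
  | nil => exact absurd rfl hab
  | @cons _ w _ hadj q =>
    refine ⟨w, hadj, fun X hX => ?_⟩
    -- the unique path from `a` to `b` runs inside the connected set of labels containing `X`
    obtain ⟨r, hr⟩ : ∃ r : T.Walk a b, ∀ x ∈ r.support, X ∈ ℓ x := by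
      obtain ⟨r⟩ := hℓ X ⟨a, hX⟩ ⟨b, hsub hX⟩
      have hr : ∀ x ∈ (r.map (Embedding.induce _).toHom).support, X ∈ ℓ x := by
        simp only [Walk.support_map, List.mem_map]
        rintro _ ⟨⟨x, hx⟩, -, rfl⟩
        exact hx
      exact ⟨_, hr⟩
    refine hr w (r.support_bypass_subset_support ?_)
    rw [hp _ r.bypass_isPath]
    simp

variable {u v : V}

open Classical in
noncomputable def mergeInto (u v : V) (hvu : v ≠ u) (x : V) : {w // w ≠ u} :=
  if h : x = u then ⟨v, hvu⟩ else ⟨x, h⟩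

theorem mergeInto_val (hvu : v ≠ u) (w : {w // w ≠ u}) : mergeInto u v hvu w = w := by
  simp [mergeInto, w.2]

theorem mergeInto_self (hvu : v ≠ u) : mergeInto u v hvu u = ⟨v, hvu⟩ := by
  simp [mergeInto]

theorem val_mergeInto_of_ne (hvu : v ≠ u) {x : V} (hx : x ≠ u) : (mergeInto u v hvu x : V) = x := by
  simp [mergeInto, hx]

theorem preconnected_induce_mergeInto_fiber (huv : T.Adj u v) (w : {w // w ≠ u}) :
    (T.induce (mergeInto u v huv.ne' ⁻¹' {w})).Preconnected := by
  have key : ∀ x y, mergeInto u v huv.ne' x = mergeInto u v huv.ne' y → x = y ∨ T.Adj x y := by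
    intro x y h
    unfold mergeInto at h
    split_ifs at h with hx hy hy <;> simp only [Subtype.mk.injEq] at h <;> subst_vars
    · exact Or.inl rfl
    · exact Or.inr huv
    · exact Or.inr huv.symm
    · exact Or.inl rfl
  rintro ⟨x, hx⟩ ⟨y, hy⟩
  rcases key x y (hx.trans hy.symm) with rfl | h
  · rfl
  · exact Adj.reachable (G := T.induce _) h

end SimpleGraph

namespace FinHypergraph

open Classical

variable {α : Type*} {H H' H1 K : FinHypergraph α}

theorem HLe.trans {H3 : FinHypergraph α} (h12 : H1.HLe H) (h23 : H.HLe H3) : H1.HLe H3 := by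
  intro e he
  obtain ⟨e', he', hee'⟩ := h12 e he
  obtain ⟨e'', he'', he'e''⟩ := h23 e' he'
  exact ⟨e'', he'', hee'.trans he'e''⟩

theorem HLe.nodes_subset (h : H.HLe H') : H.nodes ⊆ H'.nodes := by
  rintro x ⟨e, he, hx⟩
  obtain ⟨e', he', hee'⟩ := h e he
  exact ⟨e', he', hee' hx⟩

theorem Contained.mono_left (h : K.Contained H) (hsub : H'.edges ⊆ K.edges) : H'.Contained H := by
  intro e he heH
  obtain ⟨e', he', he'K, hee'⟩ := h e (hsub he) heH
  exact ⟨e', he', fun he'H' => he'K (hsub he'H'), hee'⟩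

noncomputable def reduction (H : FinHypergraph α) : FinHypergraph α :=
  ⟨H.edges.filter (Maximal (· ∈ H.edges))⟩

theorem reduction_edges_subset (H : FinHypergraph α) : H.reduction.edges ⊆ H.edges :=
  Finset.filter_subset _ _

theorem reduction_hle (H : FinHypergraph α) : H.reduction.HLe H :=
  fun e he => ⟨e, H.reduction_edges_subset he, subset_rfl⟩

theorem hle_reduction (H : FinHypergraph α) : H.HLe H.reduction := by
  intro e he
  obtain ⟨e', hee', he'⟩ := H.edges.exists_le_maximal he
  exact ⟨e', Finset.mem_filter.2 ⟨he'.1, he'⟩, hee'⟩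

theorem reduced_reduction : H.reduction.Reduced := by
  intro e he e' he' hss
  exact hss.2 ((Finset.mem_filter.1 he).2.2 (H.reduction_edges_subset he') hss.1)

noncomputable def restrict (H : FinHypergraph α) (S : Set α) : FinHypergraph α :=
  ⟨H.edges.image fun e => e.filter (· ∈ S)⟩

theorem restrict_hle (H : FinHypergraph α) (S : Set α) : (H.restrict S).HLe H := by
  intro e he
  obtain ⟨e', he', rfl⟩ := Finset.mem_image.1 he
  exact ⟨e', he', Finset.filter_subset _ _⟩

theorem nodes_restrict_subset (H : FinHypergraph α) (S : Set α) : (H.restrict S).nodes ⊆ S := by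
  rintro x ⟨e, he, hx⟩
  obtain ⟨e', -, rfl⟩ := Finset.mem_image.1 he
  exact (Finset.mem_filter.1 hx).2

theorem HLe.hle_restrict_nodes (h : H1.HLe H) : H1.HLe (H.restrict H1.nodes) := by
  intro e he
  obtain ⟨e', he', hee'⟩ := h e he
  exact ⟨_, Finset.mem_image_of_mem _ he', fun x hx => Finset.mem_filter.2 ⟨hee' hx, e, he, hx⟩⟩

theorem restrict_contained (H : FinHypergraph α) (S : Set α) : (H.restrict S).Contained H := by
  intro e he heH
  obtain ⟨e', he', rfl⟩ := Finset.mem_image.1 he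
  refine ⟨e', he', fun he'S => heH ?_, Finset.filter_subset _ _⟩
  -- a hyperedge of the restriction already lies in `S`, so restricting it changes nothing
  rwa [Finset.filter_true_of_mem fun x hx => H.nodes_restrict_subset S ⟨e', he'S, hx⟩]

open SimpleGraph

theorem Reduced.acyclic_of_isTree {H : FinHypergraph α} (hH : H.Reduced) {V : Type*} [Finite V]
    {T : SimpleGraph V} (hT : T.IsTree) {ℓ : V → Finset α} (hℓ : T.RunningIntersection ℓ)
    (hcover : ∀ b, ∃ e ∈ H.edges, ℓ b ⊆ e) (hsurj : ∀ e ∈ H.edges, ∃ b, ℓ b = e) :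
    H.Acyclic := by
  induction hn : Nat.card V using Nat.strong_induction_on generalizing V with
  | _ n ih =>
  by_cases hdom : ∃ u v, T.Adj u v ∧ ℓ u ⊆ ℓ v
  · -- contract an edge `uv` with `ℓ u ⊆ ℓ v`; the label `ℓ v` takes over the role of `ℓ u`
    obtain ⟨u, v, huv, hsub⟩ := hdom
    have hvu := huv.ne'
    have hsec (w : {w // w ≠ u}) : ∃ x, mergeInto u v hvu x = w ∧ ℓ w ⊆ ℓ x :=
      ⟨w, mergeInto_val hvu w, subset_rfl⟩
    have hle (x : V) : ℓ x ⊆ ℓ (mergeInto u v hvu x) := by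
      by_cases hx : x = u
      · rwa [hx, mergeInto_self]
      · rw [val_mergeInto_of_ne hvu hx]
    refine ih _ (hn ▸ Finite.card_subtype_lt (not_not.2 rfl)) (T := T.map (mergeInto u v hvu))
      (hT.map (fun w => (hsec w).imp fun _ => And.left) (preconnected_induce_mergeInto_fiber huv))
      (hℓ.map hle hsec) (fun w => hcover w) (fun e he => ?_) rfl
    obtain ⟨b, rfl⟩ := hsurj e he
    by_cases hb : b = u
    · subst hb
      obtain ⟨e', he', hve'⟩ := hcover v
      have hue' : ℓ b = e' := (hsub.trans hve').eq_or_ssubset.resolve_right (hH _ he _ he')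
      exact ⟨⟨v, hvu⟩, hsub.antisymm' (hue' ▸ hve')⟩
    · exact ⟨⟨b, hb⟩, rfl⟩
  · -- otherwise the labels form an antichain, so `ℓ` is a bijection onto the hyperedges
    push Not at hdom
    have hanti (a b : V) (hab : ℓ a ⊆ ℓ b) : a = b := by
      by_contra hne
      obtain ⟨w, haw, hsub⟩ := hℓ.exists_adj_subset hT hne hab
      exact hdom a w haw hsub
    have hmem (b : V) : ℓ b ∈ H.edges := by
      obtain ⟨e, he, hbe⟩ := hcover b
      obtain ⟨b', rfl⟩ := hsurj e he
      rwa [hanti b b' hbe]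
    let f : V → Hyperedge H := fun b => ⟨ℓ b, hmem b⟩
    have hf : f.Bijective :=
      ⟨fun a b h => hanti a b (congrArg Subtype.val h).le,
        fun e => (hsurj e.1 e.2).imp fun _ => Subtype.ext⟩
    exact ⟨⟨T.map f, (Iso.map (Equiv.ofBijective f hf) T).isTree_iff.1 hT,
      hℓ.map (fun _ => subset_rfl) fun e => (hf.2 e).imp fun _ hb => ⟨hb, hb ▸ subset_rfl⟩⟩⟩

theorem Acyclic.reduction_restrict {H : FinHypergraph α} (h : H.Acyclic) (S : Set α) :
    (H.restrict S).reduction.Acyclic := by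
  obtain ⟨JT⟩ := h
  refine reduced_reduction.acyclic_of_isTree JT.isTree
    (RunningIntersection.filter JT.node_connected S) (fun b => ?_) fun e he => ?_
  · exact hle_reduction _ _ (Finset.mem_image_of_mem _ b.2)
  · obtain ⟨g, hg, rfl⟩ := Finset.mem_image.1 (reduction_edges_subset _ he)
    exact ⟨⟨g, hg⟩, rfl⟩

end FinHypergraph

theorem minimal_tp_nodes_eq {α : Type*} (H1 H2 Ha : FinHypergraph α)
    (hmin : IsMinimalTreeProjection H1 H2 Ha) : Ha.nodes = H1.nodes := by
  obtain ⟨⟨hacyc, hle1, hle2⟩, hmin⟩ := hmin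
  refine Set.Subset.antisymm ?_ hle1.nodes_subset
  by_contra hnot
  -- otherwise restricting `Ha` to the nodes of `H1` gives a smaller tree projection
  let R := Ha.restrict H1.nodes
  have htp : IsTreeProjection H1 H2 R.reduction :=
    ⟨hacyc.reduction_restrict _, hle1.hle_restrict_nodes.trans R.hle_reduction,
      R.reduction_hle.trans ((Ha.restrict_hle _).trans hle2)⟩
  refine hmin R.reduction htp
    ⟨(Ha.restrict_contained _).mono_left R.reduction_edges_subset, fun heq => hnot ?_⟩
  rw [← heq]
  exact R.reduction_hle.nodes_subset.trans (Ha.nodes_restrict_subset _)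
end

section
/- Let Ha be a reduced acyclic hypergraph. Then for any hyperedge h ∈ edges(Ha), there exists a join tree of Ha rooted at h that is an Ha-component tree. -/
/-!
Fix any join tree of `H`. For a hyperedge `r` and an `[r]`-component `C`, the hyperedge meeting `C`
that is closest to `r` in that tree contains the whole interface `Fr C ∩ r`; call it `rep r C`.
The component tree rooted at `h0` is built from these representatives: to find the parent of `e`,
walk from `h0` towards `e`, moving from `r` to `rep r C` where `C` is the `[r]`-component containing
`e \ r` (nonempty because `H` is reduced). The component shrinks at every move, so the walk ends at
`e`, and its last step leaves the parent of `e`. Since `rep r C` covers `Fr C ∩ r`, no path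
avoiding `rep r C` leaves `C`; hence the components along a branch are nested and the subtree below
a child `s` of `r` covers exactly `C⊤(s) ∪ (s ∩ r)`.
-/

namespace SimpleGraph

variable {V : Type*} {G : SimpleGraph V}

lemma Connected.dist_lt_dist_of_cut (hG : G.Connected) {S : Set V} {a b : V}
    (hcut : ∀ x y, G.Adj x y → x ∈ S → y ∉ S → x = a ∧ y = b) (hb : b ∉ S)
    {v : V} (hv : v ∈ S) : G.dist v a < G.dist v b := by
  classical
  obtain ⟨w, hw⟩ := hG.exists_walk_length_eq_dist v b
  obtain ⟨d, hd, hdS, hdS'⟩ := w.exists_boundary_dart S hv hb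
  obtain ⟨rfl, -⟩ := hcut _ _ d.adj hdS hdS'
  have ha : d.fst ∈ w.support := w.dart_fst_mem_support_of_mem_darts hd
  calc G.dist v d.fst ≤ (w.takeUntil _ ha).length := dist_le _
    _ < w.length := Walk.length_takeUntil_lt_length ha (ne_of_mem_of_not_mem hdS hb)
    _ = G.dist v b := hw

/-- A geodesic from `r` to `e` followed by a path inside `B` is a path, hence the unique one. -/
lemma IsTree.mem_support_of_forall_dist_le (hG : G.IsTree) {B : Set V}
    (hB : (G.induce B).Preconnected) {r e f : V} (he : e ∈ B)
    (hmin : ∀ b ∈ B, G.dist r e ≤ G.dist r b) (hf : f ∈ B) (R : G.Walk r f) :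
    e ∈ R.support := by
  classical
  obtain ⟨P, hP⟩ := hG.connected.exists_walk_length_eq_dist r e
  obtain ⟨Q'⟩ := hB ⟨e, he⟩ ⟨f, hf⟩
  set Q : G.Walk e f := (Q'.map (Embedding.induce B).toHom).bypass
  have hQB : ∀ v ∈ Q.support, v ∈ B := fun v hv => by
    obtain ⟨v', -, rfl⟩ := List.mem_map.1
      (Walk.support_map _ Q' ▸ Walk.support_bypass_subset_support _ hv)
    exact v'.2
  have hQ : Q.support.Nodup := (Walk.isPath_def _).1 (Walk.bypass_isPath _)
  have hPQ : (P.append Q).IsPath := by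
    rw [Walk.isPath_def, Walk.support_append]
    refine ((Walk.isPath_def _).1 (P.isPath_of_length_eq_dist hP)).append
      (hQ.sublist (List.tail_sublist _)) fun v hvP hvQ => ?_
    have hve : v ≠ e := by
      rintro rfl
      rw [← Walk.cons_tail_support] at hQ
      exact (List.nodup_cons.1 hQ).1 hvQ
    have := hmin v (hQB v (List.mem_of_mem_tail hvQ))
    have : G.dist r v < G.dist r e :=
      calc G.dist r v ≤ (P.takeUntil v hvP).length := dist_le _
        _ < P.length := Walk.length_takeUntil_lt_length hvP hve
        _ = G.dist r e := hP
    omega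
  have hR : P.append Q = R.bypass :=
    congrArg Subtype.val ((hG.isAcyclic.subsingleton_path r f).elim ⟨_, hPQ⟩
      ⟨_, R.bypass_isPath⟩)
  exact Walk.support_bypass_subset_support _
    (hR ▸ (Walk.mem_support_append_iff _ _).2 (Or.inl P.end_mem_support))

end SimpleGraph

namespace ParentTree

open SimpleGraph

variable {V : Type*} (p : V → V) (root : V)

/-- `Descends p root v s`: `s` is reached from `v` by following parents. -/
def Descends (v s : V) : Prop := Relation.ReflTransGen (fun a b => a ≠ root ∧ p a = b) v s

def graph : SimpleGraph V := fromRel fun a b => a ≠ root ∧ p a = b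

def IsDepth (d : V → ℕ) : Prop := ∀ v, v ≠ root → d (p v) + 1 = d v

variable {p root} {d : V → ℕ}

lemma Descends.depth_lt (hd : IsDepth p root d) {v s : V}
    (h : Descends p root v s) (hvs : v ≠ s) : d s < d v := by
  induction h using Relation.ReflTransGen.head_induction_on with
  | refl => exact absurd rfl hvs
  | head hstep _ ih =>
    obtain ⟨ha, rfl⟩ := hstep
    have := hd _ ha
    rcases eq_or_ne (p _) s with hc | hc
    · rw [hc] at this; omega
    · have := ih hc; omega

lemma Descends.antisymm (hd : IsDepth p root d) {v s : V}
    (h : Descends p root v s) (h' : Descends p root s v) : v = s := by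
  by_contra hvs
  have := h.depth_lt hd hvs
  have := h'.depth_lt hd (Ne.symm hvs)
  omega

lemma Descends.of_parent {v s : V} (hv : v ≠ root) (h : Descends p root (p v) s) :
    Descends p root v s :=
  Relation.ReflTransGen.head ⟨hv, rfl⟩ h

lemma Descends.parent {v s : V} (h : Descends p root v s) (hvs : v ≠ s) :
    Descends p root (p v) s := by
  rcases Relation.ReflTransGen.cases_head_iff.1 h with rfl | ⟨c, ⟨-, rfl⟩, hc⟩
  · exact absurd rfl hvs
  · exact hc

lemma root_descends_iff {s : V} : Descends p root root s ↔ s = root := by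
  refine ⟨fun h => ?_, fun h => h ▸ .refl⟩
  rcases Relation.ReflTransGen.cases_head_iff.1 h with rfl | ⟨c, ⟨hr, -⟩, -⟩
  · rfl
  · exact absurd rfl hr

lemma descends_iff_of_ne {v s : V} (hv : v ≠ root) :
    Descends p root v s ↔ v = s ∨ Descends p root (p v) s := by
  refine ⟨fun h => ?_, fun h => h.elim (fun h => h ▸ .refl) (.of_parent hv)⟩
  by_cases hvs : v = s
  · exact Or.inl hvs
  · exact Or.inr (h.parent hvs)

lemma descends_root (hd : IsDepth p root d) (v : V) : Descends p root v root := by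
  induction hn : d v using Nat.strong_induction_on generalizing v with
  | _ n ih =>
    by_cases hv : v = root
    · exact hv ▸ .refl
    · exact .of_parent hv (ih _ (hn ▸ hd v hv ▸ Nat.lt_succ_self _) _ rfl)

lemma graph_adj (hd : IsDepth p root d) {a b : V} :
    (graph p root).Adj a b ↔ (a ≠ root ∧ p a = b) ∨ (b ≠ root ∧ p b = a) := by
  refine (fromRel_adj _ _ _).trans ⟨And.right, fun h => ⟨?_, h⟩⟩
  rintro rfl
  rcases h with ⟨ha, hpa⟩ | ⟨ha, hpa⟩ <;> · have := hd _ ha; rw [hpa] at this; omega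

lemma Descends.exists_walk (hd : IsDepth p root d) {v s : V}
    (h : Descends p root v s) : ∃ w : (graph p root).Walk v s, w.length + d s = d v := by
  induction h using Relation.ReflTransGen.head_induction_on with
  | refl => exact ⟨.nil, by simp⟩
  | head hstep _ ih =>
    obtain ⟨ha, rfl⟩ := hstep
    obtain ⟨w, hw⟩ := ih
    have := hd _ ha
    refine ⟨.cons ((graph_adj hd).2 (Or.inl ⟨ha, rfl⟩)) w, ?_⟩
    rw [Walk.length_cons]; omega

lemma depth_le_length_add (hd : IsDepth p root d) {a b : V}
    (w : (graph p root).Walk a b) : d b ≤ w.length + d a := by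
  induction w with
  | nil => simp
  | cons hadj w ih =>
    rw [Walk.length_cons]
    rcases (graph_adj hd).1 hadj with ⟨ha, rfl⟩ | ⟨hb, rfl⟩
    · have := hd _ ha; omega
    · have := hd _ hb; omega

lemma graph_connected (hd : IsDepth p root d) : (graph p root).Connected :=
  (connected_iff_exists_forall_reachable _).2 ⟨root, fun v =>
    (((descends_root hd v).exists_walk hd).elim fun w _ => w.reachable).symm⟩

lemma dist_root (hd : IsDepth p root d) (v : V) :
    (graph p root).dist root v + d root = d v := by
  obtain ⟨w, hw⟩ := (descends_root hd v).exists_walk hd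
  obtain ⟨w', hw'⟩ := (graph_connected hd).exists_walk_length_eq_dist root v
  have := dist_le w.reverse
  have := depth_le_length_add hd w'
  rw [Walk.length_reverse, dist_comm] at *
  omega

lemma adj_dist_root_lt_iff (hd : IsDepth p root d) {r s : V} :
    (graph p root).Adj r s ∧ (graph p root).dist root r < (graph p root).dist root s ↔
      s ≠ root ∧ p s = r := by
  have hr := dist_root hd r
  have hs := dist_root hd s
  rw [graph_adj hd]
  constructor
  · rintro ⟨⟨hr0, rfl⟩ | h, hlt⟩
    · have := hd r hr0; omega
    · exact h
  · rintro ⟨hs0, rfl⟩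
    have := hd s hs0
    exact ⟨Or.inr ⟨hs0, rfl⟩, by omega⟩

lemma dist_lt_dist_parent_iff (hd : IsDepth p root d) {s : V} (hs : s ≠ root)
    (v : V) : (graph p root).dist v s < (graph p root).dist v (p s) ↔ Descends p root v s := by
  set S := {v | Descends p root v s}
  have hcut : ∀ x y, (graph p root).Adj x y → x ∈ S → y ∉ S → x = s ∧ y = p s := by
    intro x y hxy hx hy
    rcases (graph_adj hd).1 hxy with ⟨-, rfl⟩ | ⟨hy0, rfl⟩
    · by_cases hxs : x = s
      · exact ⟨hxs, hxs ▸ rfl⟩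
      · exact absurd (Descends.parent hx hxs) hy
    · exact absurd (Descends.of_parent hy0 hx) hy
  have hps : p s ∉ S := fun h => by
    have := hd s hs
    have := Descends.depth_lt hd h (fun h' => by rw [h'] at this; omega)
    omega
  have hconn := graph_connected hd
  refine ⟨fun hlt => ?_, hconn.dist_lt_dist_of_cut hcut hps⟩
  by_contra hv
  have := hconn.dist_lt_dist_of_cut (S := Sᶜ) (a := p s) (b := s)
    (fun x y hxy hx hy => (hcut y x hxy.symm (not_not.1 hy) hx).symm)
    (not_not.2 Relation.ReflTransGen.refl) hv
  omega

/-- Every element of `S` climbs inside `S` to the one element of `S` from which all of `S`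
descends. -/
lemma induce_graph_preconnected (hd : IsDepth p root d) {S : Set V}
    (hS : ∀ e ∈ S, e ≠ root → p e ∉ S → ∀ f ∈ S, Descends p root f e) :
    ((graph p root).induce S).Preconnected := by
  have hreach_top : ∀ u (hu : u ∈ S), ∃ t, ∃ ht : t ∈ S,
      ((graph p root).induce S).Reachable ⟨u, hu⟩ ⟨t, ht⟩ ∧
        ∀ f ∈ S, Descends p root f t := by
    intro u
    induction descends_root hd u using Relation.ReflTransGen.head_induction_on with
    | refl => exact fun hu => ⟨root, hu, .rfl, fun f _ => descends_root hd f⟩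
    | head hstep _ ih =>
      obtain ⟨ha, rfl⟩ := hstep
      intro hu
      rcases em (p _ ∈ S) with hpu | hpu
      · obtain ⟨t, ht, hreach, htop⟩ := ih hpu
        refine ⟨t, ht, .trans (Adj.reachable ?_) hreach, htop⟩
        exact induce_adj.2 ((graph_adj hd).2 (Or.inl ⟨ha, rfl⟩))
      · exact ⟨_, hu, .rfl, hS _ hu ha hpu⟩
  rintro ⟨u, hu⟩ ⟨v, hv⟩
  obtain ⟨t, ht, hut, htop⟩ := hreach_top u hu
  obtain ⟨t', ht', hvt', htop'⟩ := hreach_top v hv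
  obtain rfl : t = t' := (htop' t ht).antisymm hd (htop t' ht')
  exact hut.trans hvt'.symm

lemma graph_isTree [Finite V] (hd : IsDepth p root d) :
    (graph p root).IsTree := by
  refine isTree_iff_connected_and_card.2 ⟨graph_connected hd, ?_⟩
  let f : {v // v ≠ root} → (graph p root).edgeSet := fun v =>
    ⟨s(v.1, p v.1), (graph_adj hd).2 (Or.inl ⟨v.2, rfl⟩)⟩
  have hf : Function.Bijective f := by
    constructor
    · rintro ⟨v, hv⟩ ⟨w, hw⟩ hvw
      rcases Sym2.eq_iff.1 (congrArg Subtype.val hvw) with ⟨h, -⟩ | ⟨h, h'⟩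
      · exact Subtype.ext h
      · dsimp only at h h'
        have hv' := hd v hv
        have hw' := hd w hw
        rw [h'] at hv'
        rw [← h] at hw'
        omega
    · rintro ⟨e, he⟩
      induction e using Sym2.ind with
      | _ a b =>
        rcases (graph_adj hd).1 he with ⟨ha, hab⟩ | ⟨hb, hba⟩
        · dsimp only at ha hab
          subst hab
          exact ⟨⟨a, ha⟩, rfl⟩
        · dsimp only at hb hba
          subst hba
          exact ⟨⟨b, hb⟩, Subtype.ext Sym2.eq_swap⟩
  rw [← Nat.card_congr (Equiv.ofBijective f hf)]
  classical
  have := Fintype.ofFinite V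
  have := Fintype.card_pos_iff.2 ⟨root⟩
  rw [Nat.card_eq_fintype_card, Nat.card_eq_fintype_card, Fintype.card_subtype_compl,
    Fintype.card_subtype_eq]
  omega

end ParentTree

namespace FinHypergraph

variable {α : Type*} {H : FinHypergraph α} {V W C D : Set α} {x y : α}

lemma Adj.symm (h : H.Adj V x y) : H.Adj V y x :=
  let ⟨e, he, hx, hy, hxV, hyV⟩ := h
  ⟨e, he, hy, hx, hyV, hxV⟩

lemma VPath.symm (h : H.VPath V x y) : H.VPath V y x := by
  induction h with
  | refl => exact .refl
  | tail _ hab ih => exact .head hab.symm ih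

lemma VPath.mem_of_isClosed (h : H.VPath V x y) (hC : ∀ a b, H.Adj V a b → a ∈ C → b ∈ C)
    (hx : x ∈ C) : y ∈ C := by
  induction h with
  | refl => exact hx
  | tail _ hab ih => exact hC _ _ hab ih

def component (H : FinHypergraph α) (V : Set α) (x : α) : Set α :=
  {y | (y ∈ H.nodes ∧ y ∉ V) ∧ H.VPath V x y}

lemma isComponent_component (hx : x ∈ H.nodes) (hxV : x ∉ V) :
    H.IsComponent V (H.component V x) := by
  have hxx : x ∈ H.component V x := ⟨⟨hx, hxV⟩, .refl⟩
  refine ⟨⟨x, hxx⟩, fun y hy => hy.1, fun y hy z hz => hy.2.symm.trans hz.2, ?_⟩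
  intro C' hsub hsub' hconn
  exact le_antisymm (fun y hy => ⟨hsub' hy, hconn x (hsub hxx) y hy⟩) hsub

lemma IsComponent.not_mem (hC : H.IsComponent V C) (hx : x ∈ C) : x ∉ V :=
  (hC.2.1 hx).2

lemma IsComponent.eq_component (hC : H.IsComponent V C) (hx : x ∈ C) :
    C = H.component V x := by
  refine (hC.2.2.2 _ (fun y hy => ?_) (fun y hy => hy.1)
    (isComponent_component (hC.2.1 hx).1 (hC.not_mem hx)).2.2.1).symm
  exact ⟨hC.2.1 hy, hC.2.2.1 x hx y hy⟩

lemma IsComponent.eq_of_mem (hC : H.IsComponent V C) (hD : H.IsComponent V D)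
    (hxC : x ∈ C) (hxD : x ∈ D) : C = D := by
  rw [hC.eq_component hxC, hD.eq_component hxD]

lemma IsComponent.mem_of_adj (hC : H.IsComponent V C) (hx : x ∈ C) (hxy : H.Adj V x y) :
    y ∈ C := by
  obtain ⟨e, he, -, hy, -, hyV⟩ := id hxy
  rw [hC.eq_component hx]
  exact ⟨⟨⟨e, he, hy⟩, hyV⟩, .single hxy⟩

lemma IsComponent.finite (hC : H.IsComponent V C) : C.Finite :=
  (H.edges.finite_toSet.biUnion fun e _ => e.finite_toSet).subset fun x hx => by
    obtain ⟨e, he, hxe⟩ := (hC.2.1 hx).1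
    exact Set.mem_biUnion he hxe

lemma mem_fr {e : Finset α} (he : e ∈ H.edges) (hx : x ∈ e) (hy : y ∈ e) (hyC : y ∈ C) :
    x ∈ H.Fr C :=
  ⟨e, he, hx, y, hyC, hy⟩

lemma IsComponent.fr_subset (hC : H.IsComponent V C) : H.Fr C ⊆ C ∪ V := by
  rintro x ⟨e, he, hxe, y, hyC, hye⟩
  by_cases hxV : x ∈ V
  · exact Or.inr hxV
  · exact Or.inl (hC.mem_of_adj hyC ⟨e, he, hye, hxe, hC.not_mem hyC, hxV⟩)

/-- A `[W]`-path cannot leave `C` through `V`. -/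
lemma IsComponent.subset_of_fr_inter_subset (hC : H.IsComponent V C) (hW : H.Fr C ∩ V ⊆ W)
    (hD : H.IsComponent W D) (hDC : (D ∩ C).Nonempty) : D ⊆ C := by
  obtain ⟨x, hxD, hxC⟩ := hDC
  refine fun y hyD => (hD.2.2.1 x hxD y hyD).mem_of_isClosed ?_ hxC
  rintro a b ⟨e, he, hae, hbe, -, hbW⟩ haC
  have hb : b ∈ H.Fr C := mem_fr he hbe hae haC
  exact (hC.fr_subset hb).resolve_right fun hbV => hbW (hW ⟨hb, hbV⟩)

lemma Reduced.exists_mem_not_mem (hred : H.Reduced) {e f : Hyperedge H} (hne : e ≠ f) :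
    ∃ x ∈ e.1, x ∉ f.1 := by
  by_contra! hc
  exact hred e.1 e.2 f.1 f.2 (Finset.ssubset_iff_subset_ne.2 ⟨hc, fun h => hne (Subtype.ext h)⟩)

end FinHypergraph

namespace JoinTree

open SimpleGraph FinHypergraph

variable {α : Type*} {H : FinHypergraph α} (JT : JoinTree H) {V C : Set α}

lemma exists_walk_of_mem {X : α} {u v : Hyperedge H} (hu : X ∈ u.1) (hv : X ∈ v.1) :
    ∃ w : JT.T.Walk u v, ∀ z ∈ w.support, X ∈ z.1 := by
  obtain ⟨w⟩ := JT.node_connected X ⟨u, hu⟩ ⟨v, hv⟩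
  refine ⟨w.map (Embedding.induce _).toHom, fun z hz => ?_⟩
  obtain ⟨z', -, rfl⟩ := List.mem_map.1 (Walk.support_map _ w ▸ hz)
  exact z'.2

lemma induce_inter_nonempty_preconnected (hC : H.IsComponent V C) :
    (JT.T.induce {e : Hyperedge H | ((e.1 : Set α) ∩ C).Nonempty}).Preconnected := by
  set S := {e : Hyperedge H | ((e.1 : Set α) ∩ C).Nonempty}
  have hX : ∀ X ∈ C, ∀ a b : S, X ∈ a.1.1 → X ∈ b.1.1 →
      (JT.T.induce S).Reachable a b := by
    rintro X hXC ⟨u, hu⟩ ⟨v, hv⟩ hXu hXv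
    exact (JT.node_connected X ⟨u, hXu⟩ ⟨v, hXv⟩).map
      (induceHom Hom.id fun z hz => show ((z.1 : Set α) ∩ C).Nonempty from ⟨X, hz, hXC⟩)
  intro a b
  obtain ⟨x, hxa, hxC⟩ := a.2
  obtain ⟨y, hyb, hyC⟩ := b.2
  have key : ∀ z, H.VPath V x z →
      z ∈ C ∧ ∀ c : S, z ∈ c.1.1 → (JT.T.induce S).Reachable a c := by
    intro z hz
    induction hz with
    | refl => exact ⟨hxC, fun c hxc => hX x hxC a c hxa hxc⟩
    | tail _ hbc ih =>
      obtain ⟨hbC, ihb⟩ := ih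
      have hcC := hC.mem_of_adj hbC hbc
      obtain ⟨f, hf, hbf, hcf, -, -⟩ := hbc
      let fS : S := ⟨⟨f, hf⟩, _, hbf, hbC⟩
      exact ⟨hcC, fun c hcc => (ihb fS hbf).trans (hX _ hcC fS c hcf hcc)⟩
  exact (key y (hC.2.2.1 x hxC y hyC)).2 b hyb

end JoinTree

/-- Witness: the hyperedge meeting `C` that is closest to `r` in a join tree, through which every
hyperedge meeting `C` is reached from `r`. -/
lemma FinHypergraph.Acyclic.exists_inter_nonempty_fr_inter_subset {α : Type*}
    {H : FinHypergraph α} (hH : H.Acyclic) {V C : Set α} (hC : H.IsComponent V C)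
    (r : Hyperedge H) :
    ∃ e : Hyperedge H, ((e.1 : Set α) ∩ C).Nonempty ∧ H.Fr C ∩ r.1 ⊆ e.1 := by
  obtain ⟨JT⟩ := hH
  set S := {e : Hyperedge H | ((e.1 : Set α) ∩ C).Nonempty}
  obtain ⟨y, hy⟩ := hC.1
  obtain ⟨f, hf, hyf⟩ := (hC.2.1 hy).1
  obtain ⟨e, heS, hmin⟩ := Set.exists_min_image S (JT.T.dist r) (Set.toFinite S)
    ⟨⟨f, hf⟩, y, hyf, hy⟩
  refine ⟨e, heS, ?_⟩
  rintro x ⟨⟨f, hf, hxf, y, hyC, hyf⟩, hxr⟩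
  obtain ⟨w, hw⟩ := JT.exists_walk_of_mem (u := r) (v := ⟨f, hf⟩) hxr hxf
  exact hw e (JT.isTree.mem_support_of_forall_dist_le (JT.induce_inter_nonempty_preconnected hC)
    heS hmin ⟨y, hyf, hyC⟩ w)

namespace FinHypergraph

variable {α : Type*} {H : FinHypergraph α}

structure RepSystem (H : FinHypergraph α) where
  reduced : H.Reduced
  rep : Hyperedge H → Set α → Hyperedge H
  rep_inter_nonempty : ∀ r C, H.IsComponent r.1 C → (((rep r C).1 : Set α) ∩ C).Nonempty
  fr_inter_subset_rep : ∀ r C, H.IsComponent r.1 C → H.Fr C ∩ r.1 ⊆ (rep r C).1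

lemma Acyclic.nonempty_repSystem (hred : H.Reduced) (hH : H.Acyclic) : Nonempty H.RepSystem := by
  classical
  choose! rep hrep using fun (r : Hyperedge H) (C : Set α) (hC : H.IsComponent r.1 C) =>
    hH.exists_inter_nonempty_fr_inter_subset hC r
  exact ⟨⟨hred, rep, fun r C hC => (hrep r C hC).1, fun r C hC => (hrep r C hC).2⟩⟩

open Classical in
/-- The `[r]`-component containing `e \ r` (empty when `e ⊆ r`). -/
noncomputable def compOf (r e : Hyperedge H) : Set α :=
  if h : ∃ x ∈ e.1, x ∉ r.1 then H.component r.1 h.choose else ∅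

variable {r e f : Hyperedge H} {C : Set α} {x : α}

lemma compOf_self (r : Hyperedge H) : compOf r r = ∅ :=
  dif_neg fun ⟨_, hx, hx'⟩ => hx' hx

lemma mem_compOf (hx : x ∈ e.1) (hxr : x ∉ r.1) : x ∈ compOf r e := by
  have h : ∃ x ∈ e.1, x ∉ r.1 := ⟨x, hx, hxr⟩
  rw [compOf, dif_pos h]
  refine ⟨⟨⟨e, e.2, hx⟩, by simpa using hxr⟩, .single ?_⟩
  exact ⟨e, e.2, h.choose_spec.1, hx, by simpa using h.choose_spec.2, by simpa using hxr⟩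

lemma isComponent_compOf_of_mem (hx : x ∈ e.1) (hxr : x ∉ r.1) :
    H.IsComponent r.1 (compOf r e) := by
  have h : ∃ x ∈ e.1, x ∉ r.1 := ⟨x, hx, hxr⟩
  rw [compOf, dif_pos h]
  exact isComponent_component ⟨e, e.2, h.choose_spec.1⟩ (by simpa using h.choose_spec.2)

lemma isComponent_compOf (hred : H.Reduced) (hne : e ≠ r) : H.IsComponent r.1 (compOf r e) :=
  let ⟨_, hx, hxr⟩ := hred.exists_mem_not_mem hne
  isComponent_compOf_of_mem hx hxr

lemma inter_compOf_nonempty (hred : H.Reduced) (hne : e ≠ r) :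
    ((e.1 : Set α) ∩ compOf r e).Nonempty :=
  let ⟨x, hx, hxr⟩ := hred.exists_mem_not_mem hne
  ⟨x, hx, mem_compOf hx hxr⟩

lemma compOf_eq (hC : H.IsComponent r.1 C) (he : ((e.1 : Set α) ∩ C).Nonempty) :
    compOf r e = C := by
  obtain ⟨x, hxe, hxC⟩ := he
  have hxr : x ∉ r.1 := by simpa using hC.not_mem hxC
  exact (isComponent_compOf_of_mem hxe hxr).eq_of_mem hC (mem_compOf hxe hxr) hxC

namespace RepSystem

variable (R : H.RepSystem) {D : Set α}

noncomputable def step (r e : Hyperedge H) : Hyperedge H := R.rep r (compOf r e)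

lemma subset_compOf_union_step (hne : e ≠ r) :
    (e.1 : Set α) ⊆ compOf r e ∪ ((R.step r e).1 ∩ r.1) := by
  have hC := isComponent_compOf R.reduced hne
  obtain ⟨y, hye, hyC⟩ := inter_compOf_nonempty R.reduced hne
  intro x hx
  have hxF : x ∈ H.Fr (compOf r e) := mem_fr e.2 hx hye hyC
  exact (hC.fr_subset hxF).imp id fun hxr => ⟨R.fr_inter_subset_rep r _ hC ⟨hxF, hxr⟩, hxr⟩

lemma rep_injective (hC : H.IsComponent r.1 C) (hD : H.IsComponent r.1 D)
    (h : R.rep r C = R.rep r D) : C = D := by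
  obtain ⟨x, hx, hxC⟩ := R.rep_inter_nonempty r C hC
  obtain ⟨y, hy, hyD⟩ := R.rep_inter_nonempty r D hD
  rw [← h] at hy
  exact hC.eq_of_mem hD (hC.mem_of_adj hxC ⟨_, (R.rep r C).2, hx, hy, hC.not_mem hxC,
    hD.not_mem hyD⟩) hyD

lemma compOf_step_ssubset (hne : e ≠ r) : compOf (R.step r e) e ⊂ compOf r e := by
  set s := R.step r e
  have hC := isComponent_compOf R.reduced hne
  obtain ⟨y, hys, hyC⟩ := R.rep_inter_nonempty r _ hC
  rcases eq_or_ne e s with hes | hes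
  · rw [← hes, compOf_self]
    exact Set.empty_ssubset.2 hC.1
  have hD := isComponent_compOf R.reduced hes
  obtain ⟨z, hze, hzs⟩ := R.reduced.exists_mem_not_mem hes
  have hzC : z ∈ compOf r e :=
    ((R.subset_compOf_union_step hne hze).resolve_right fun h => hzs h.1)
  have hDC := hC.subset_of_fr_inter_subset (R.fr_inter_subset_rep r _ hC) hD
    ⟨z, mem_compOf hze hzs, hzC⟩
  exact (Set.ssubset_iff_of_subset hDC).2 ⟨y, hyC, fun hyD => hD.not_mem hyD hys⟩

lemma ncard_compOf_step_lt (hne : e ≠ r) : (compOf (R.step r e) e).ncard < (compOf r e).ncard :=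
  Set.ncard_lt_ncard (R.compOf_step_ssubset hne) (isComponent_compOf R.reduced hne).finite

open Classical in
noncomputable def chain (r e : Hyperedge H) : List (Hyperedge H) :=
  if e = r then [e] else r :: chain (R.step r e) e
termination_by (compOf r e).ncard
decreasing_by exact R.ncard_compOf_step_lt ‹_›

lemma chain_self (r : Hyperedge H) : R.chain r r = [r] := by
  rw [chain, if_pos rfl]

lemma chain_of_ne (hne : e ≠ r) : R.chain r e = r :: R.chain (R.step r e) e := by
  rw [chain, if_neg hne]

lemma chain_eq_cons (r e : Hyperedge H) : R.chain r e = r :: (R.chain r e).tail := by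
  rcases eq_or_ne e r with rfl | hne
  · rw [chain_self]; rfl
  · rw [R.chain_of_ne hne]; rfl

lemma mem_chain_self (r e : Hyperedge H) : r ∈ R.chain r e := by
  rw [chain_eq_cons]; exact List.mem_cons_self

lemma inter_compOf_nonempty_of_mem_chain {r e : Hyperedge H} (hne : e ≠ r) {x : Hyperedge H}
    (hx : x ∈ R.chain (R.step r e) e) : ((x.1 : Set α) ∩ compOf r e).Nonempty := by
  rcases eq_or_ne e (R.step r e) with hes | hes
  · rw [← hes, chain_self, List.mem_singleton] at hx
    rw [hx]
    exact inter_compOf_nonempty R.reduced hne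
  rw [R.chain_of_ne hes, List.mem_cons] at hx
  rcases hx with rfl | hx
  · exact R.rep_inter_nonempty r _ (isComponent_compOf R.reduced hne)
  · have := R.ncard_compOf_step_lt hne
    exact (inter_compOf_nonempty_of_mem_chain hes hx).mono
      (Set.inter_subset_inter_right _ (R.compOf_step_ssubset hne).subset)
termination_by (compOf r e).ncard

lemma step_eq_rep (hC : H.IsComponent r.1 C) (hf : ((f.1 : Set α) ∩ C).Nonempty) :
    f ≠ r ∧ R.step r f = R.rep r C := by
  refine ⟨?_, by rw [step, compOf_eq hC hf]⟩
  rintro rfl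
  obtain ⟨x, hxr, hxC⟩ := hf
  exact hC.not_mem hxC hxr

lemma step_eq_of_inter_nonempty (hne : e ≠ r) (hf : ((f.1 : Set α) ∩ compOf r e).Nonempty) :
    f ≠ r ∧ R.step r f = R.step r e :=
  R.step_eq_rep (isComponent_compOf R.reduced hne) hf

lemma chain_append {r e x : Hyperedge H} (hx : x ∈ R.chain r e) :
    R.chain r x ++ (R.chain x e).tail = R.chain r e := by
  rcases eq_or_ne e r with rfl | hne
  · rw [chain_self, List.mem_singleton] at hx
    rw [hx, chain_self]; rfl
  rw [R.chain_of_ne hne, List.mem_cons] at hx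
  rcases hx with rfl | hx
  · rw [chain_self, R.chain_of_ne hne]; rfl
  · have := R.ncard_compOf_step_lt hne
    obtain ⟨hxr, hstep⟩ := R.step_eq_of_inter_nonempty hne
      (R.inter_compOf_nonempty_of_mem_chain hne hx)
    rw [R.chain_of_ne hne, R.chain_of_ne hxr, hstep, List.cons_append, chain_append hx]
termination_by (compOf r e).ncard

lemma exists_chain_eq_append {r e : Hyperedge H} (hne : e ≠ r) :
    ∃ p ∈ R.chain r e, R.chain r e = R.chain r p ++ [e] ∧ R.step p e = e := by
  rcases eq_or_ne e (R.step r e) with hes | hes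
  · refine ⟨r, R.mem_chain_self r e, ?_, hes.symm⟩
    rw [R.chain_of_ne hne, ← hes, chain_self, chain_self]
    rfl
  have := R.ncard_compOf_step_lt hne
  obtain ⟨p, hpmem, hp, hpe⟩ := exists_chain_eq_append hes
  obtain ⟨hpr, hstep⟩ := R.step_eq_of_inter_nonempty hne
    (R.inter_compOf_nonempty_of_mem_chain hne hpmem)
  refine ⟨p, ?_, ?_, hpe⟩
  · rw [R.chain_of_ne hne]
    exact List.mem_cons_of_mem _ hpmem
  · rw [R.chain_of_ne hne, R.chain_of_ne hpr, hstep, hp, List.cons_append]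
termination_by (compOf r e).ncard

lemma getLast?_chain (r e : Hyperedge H) : (R.chain r e).getLast? = some e := by
  rcases eq_or_ne e r with rfl | hne
  · rw [chain_self]; rfl
  · obtain ⟨p, -, hp, -⟩ := R.exists_chain_eq_append hne
    rw [hp, List.getLast?_concat]

lemma mem_chain_last (r e : Hyperedge H) : e ∈ R.chain r e :=
  List.mem_of_getLast? (R.getLast?_chain r e)

lemma step_mem_chain {x : Hyperedge H} (hx : x ∈ R.chain r e) (hxe : e ≠ x) :
    R.step x e ∈ R.chain r e := by
  rw [← R.chain_append hx, R.chain_of_ne hxe, List.tail_cons]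
  exact List.mem_append_right _ (R.mem_chain_self _ e)

section Rooted

open ParentTree

variable (h0 : Hyperedge H) {s v : Hyperedge H}

open Classical in
/-- The predecessor of `v` on the chain from `h0`. -/
noncomputable def parent (v : Hyperedge H) : Hyperedge H :=
  if h : v = h0 then h0 else (R.exists_chain_eq_append h).choose

lemma chain_parent (hv : v ≠ h0) : R.chain h0 v = R.chain h0 (R.parent h0 v) ++ [v] := by
  rw [parent, dif_neg hv]
  exact (R.exists_chain_eq_append hv).choose_spec.2.1

lemma step_parent (hv : v ≠ h0) : R.step (R.parent h0 v) v = v := by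
  rw [parent, dif_neg hv]
  exact (R.exists_chain_eq_append hv).choose_spec.2.2

/-- The depth of `v` below `h0`, counting `h0` itself. -/
noncomputable def depth (v : Hyperedge H) : ℕ := (R.chain h0 v).length

lemma isDepth_depth : IsDepth (R.parent h0) h0 (R.depth h0) := fun v hv => by
  rw [depth, depth, R.chain_parent h0 hv, List.length_append, List.length_singleton]

lemma parent_ne (hv : v ≠ h0) : R.parent h0 v ≠ v := fun h => by
  have := R.isDepth_depth h0 v hv
  rw [h] at this
  omega

lemma descends_iff_mem_chain (v s : Hyperedge H) :
    Descends (R.parent h0) h0 v s ↔ s ∈ R.chain h0 v := by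
  induction hn : R.depth h0 v using Nat.strong_induction_on generalizing v with
  | _ n ih =>
    rcases eq_or_ne v h0 with rfl | hv
    · rw [chain_self, List.mem_singleton, root_descends_iff]
    · have hlt := R.isDepth_depth h0 v hv
      rw [descends_iff_of_ne hv, ih _ (by omega) _ rfl, R.chain_parent h0 hv, List.mem_append,
        List.mem_singleton, eq_comm, or_comm]

lemma parent_eq_of_step_eq {r : Hyperedge H} (hr : r ∈ R.chain h0 s) (hsr : s ≠ r)
    (hstep : R.step r s = s) : R.parent h0 s = r := by
  have hs : s ≠ h0 := by
    rintro rfl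
    rw [chain_self, List.mem_singleton] at hr
    exact hsr hr.symm
  have h := R.chain_append hr
  rw [R.chain_of_ne hsr, List.tail_cons, hstep, chain_self, R.chain_parent h0 hs] at h
  have h' := congrArg List.getLast? (List.append_cancel_right h)
  rw [getLast?_chain, getLast?_chain] at h'
  exact (Option.some_injective _ h').symm

lemma step_parent_of_descends (h : Descends (R.parent h0) h0 v s) (hs0 : s ≠ h0) :
    v ≠ R.parent h0 s ∧ R.step (R.parent h0 s) v = s := by
  have h1 := R.chain_append ((R.descends_iff_mem_chain h0 v s).1 h)
  rw [R.chain_parent h0 hs0, List.append_assoc, List.singleton_append] at h1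
  have hvr : v ≠ R.parent h0 s := fun hv => by
    have := congrArg List.length h1
    rw [hv, List.length_append, List.length_cons] at this
    omega
  have hr : R.parent h0 s ∈ R.chain h0 v :=
    h1 ▸ List.mem_append_left _ (R.mem_chain_last h0 _)
  have h2 := R.chain_append hr
  rw [R.chain_of_ne hvr, List.tail_cons, R.chain_eq_cons (R.step _ v) v] at h2
  have h3 := List.append_cancel_left (h1.trans h2.symm)
  exact ⟨hvr, (List.cons_eq_cons.1 h3).1.symm⟩

lemma descends_step {f r : Hyperedge H} (h : Descends (R.parent h0) h0 f r) (hfr : f ≠ r) :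
    Descends (R.parent h0) h0 f (R.step r f) := by
  rw [descends_iff_mem_chain] at h ⊢
  exact R.step_mem_chain h hfr

/-- `C⊤(v)` in the paper's notation. -/
noncomputable def ctop (v : Hyperedge H) : Set α := compOf (R.parent h0 v) v

lemma isComponent_ctop (hv : v ≠ h0) : H.IsComponent (R.parent h0 v).1 (R.ctop h0 v) :=
  isComponent_compOf R.reduced (R.parent_ne h0 hv).symm

lemma rep_ctop (hv : v ≠ h0) : R.rep (R.parent h0 v) (R.ctop h0 v) = v :=
  R.step_parent h0 hv

lemma compOf_parent_eq_ctop_of_descends (h : Descends (R.parent h0) h0 v s) (hs : s ≠ h0) :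
    v ≠ R.parent h0 s ∧ R.step (R.parent h0 s) v = s ∧
      compOf (R.parent h0 s) v = R.ctop h0 s := by
  obtain ⟨hvr, hstep⟩ := R.step_parent_of_descends h0 h hs
  exact ⟨hvr, hstep, R.rep_injective (isComponent_compOf R.reduced hvr)
    (R.isComponent_ctop h0 hs) (hstep.trans (R.rep_ctop h0 hs).symm)⟩

lemma subset_ctop_union_of_descends (h : Descends (R.parent h0) h0 v s) (hs : s ≠ h0) :
    (v.1 : Set α) ⊆ R.ctop h0 s ∪ (s.1 ∩ (R.parent h0 s).1) := by
  obtain ⟨hvr, hstep, hcomp⟩ := R.compOf_parent_eq_ctop_of_descends h0 h hs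
  simpa only [hstep, hcomp] using R.subset_compOf_union_step hvr

lemma ctop_subset_ctop_parent (hv : v ≠ h0) (hp : R.parent h0 v ≠ h0) :
    R.ctop h0 v ⊆ R.ctop h0 (R.parent h0 v) := by
  set p := R.parent h0 v
  have hvp : Descends (R.parent h0) h0 v p := .of_parent hv .refl
  obtain ⟨z, hzv, hzp⟩ := R.reduced.exists_mem_not_mem (R.parent_ne h0 hv).symm
  have hzC : z ∈ R.ctop h0 p :=
    ((R.subset_ctop_union_of_descends h0 hvp hp hzv).resolve_right fun h => hzp h.1)
  refine (R.isComponent_ctop h0 hp).subset_of_fr_inter_subset ?_ (R.isComponent_ctop h0 hv)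
    ⟨z, mem_compOf hzv hzp, hzC⟩
  simpa only [R.rep_ctop h0 hp] using R.fr_inter_subset_rep _ _ (R.isComponent_ctop h0 hp)

lemma descends_of_inter_ctop_nonempty {f : Hyperedge H} (hs : s ≠ h0)
    (hf : ((f.1 : Set α) ∩ R.ctop h0 s).Nonempty) : Descends (R.parent h0) h0 f s := by
  induction descends_root (R.isDepth_depth h0) s
    using Relation.ReflTransGen.head_induction_on with
  | refl => exact absurd rfl hs
  | @head a _ hstep _ ih =>
    obtain ⟨ha, rfl⟩ := hstep
    have hpar : Descends (R.parent h0) h0 f (R.parent h0 a) := by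
      rcases eq_or_ne (R.parent h0 a) h0 with hp | hp
      · rw [hp]
        exact descends_root (R.isDepth_depth h0) f
      · exact ih hp (hf.mono (Set.inter_subset_inter_right _ (R.ctop_subset_ctop_parent h0 ha hp)))
    obtain ⟨hfr, hstep⟩ := R.step_eq_rep (R.isComponent_ctop h0 ha) hf
    simpa only [hstep, R.rep_ctop h0 ha] using R.descends_step h0 hpar hfr

lemma descends_of_inter_nonempty {r f : Hyperedge H} {C : Set α}
    (hCr : r = h0 ∨ C ⊆ R.ctop h0 r) (hf : ((f.1 : Set α) ∩ C).Nonempty) :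
    Descends (R.parent h0) h0 f r := by
  rcases eq_or_ne r h0 with hr | hr
  · rw [hr]
    exact descends_root (R.isDepth_depth h0) f
  · exact R.descends_of_inter_ctop_nonempty h0 hr
      (hf.mono (Set.inter_subset_inter_right _ (hCr.resolve_left hr)))

lemma parent_rep {r : Hyperedge H} {C : Set α} (hC : H.IsComponent r.1 C)
    (hCr : r = h0 ∨ C ⊆ R.ctop h0 r) :
    R.rep r C ≠ h0 ∧ R.parent h0 (R.rep r C) = r ∧ R.ctop h0 (R.rep r C) = C := by
  have hmeet := R.rep_inter_nonempty r C hC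
  have hdesc := R.descends_of_inter_nonempty h0 hCr hmeet
  obtain ⟨hsr, hstep⟩ := R.step_eq_rep hC hmeet
  have hpar : R.parent h0 (R.rep r C) = r := R.parent_eq_of_step_eq h0
    ((R.descends_iff_mem_chain h0 _ _).1 hdesc) hsr hstep
  refine ⟨fun hs => hsr ?_, hpar, by rw [ctop, hpar, compOf_eq hC hmeet]⟩
  rw [hs] at hdesc ⊢
  exact (root_descends_iff.1 hdesc).symm

lemma descends_of_mem_of_not_mem_parent {X : α} {f : Hyperedge H} (hv : v ≠ h0) (hXv : X ∈ v.1)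
    (hXp : X ∉ (R.parent h0 v).1) (hXf : X ∈ f.1) : Descends (R.parent h0) h0 f v :=
  R.descends_of_inter_ctop_nonempty h0 hv ⟨X, hXf, mem_compOf hXv hXp⟩

noncomputable def joinTree : JoinTree H where
  T := graph (R.parent h0) h0
  isTree := graph_isTree (R.isDepth_depth h0)
  node_connected _ := induce_graph_preconnected (R.isDepth_depth h0)
    fun _ hv hv0 hpv _ hf => R.descends_of_mem_of_not_mem_parent h0 hv0 hv hpv hf

lemma isChild_joinTree_iff {r : Hyperedge H} :
    (R.joinTree h0).IsChild h0 r s ↔ s ≠ h0 ∧ R.parent h0 s = r :=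
  adj_dist_root_lt_iff (R.isDepth_depth h0)

lemma subtreeNodes_joinTree (hs : s ≠ h0) :
    (R.joinTree h0).subtreeNodes (R.parent h0 s) s =
      R.ctop h0 s ∪ (s.1 ∩ (R.parent h0 s).1) := by
  have hverts : (R.joinTree h0).subtreeVerts (R.parent h0 s) s =
      {v | Descends (R.parent h0) h0 v s} :=
    Set.ext fun v => dist_lt_dist_parent_iff (R.isDepth_depth h0) hs v
  refine Set.Subset.antisymm ?_ ?_
  · rintro x ⟨v, hv, hxv⟩
    rw [hverts] at hv
    exact R.subset_ctop_union_of_descends h0 hv hs hxv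
  · rw [JoinTree.subtreeNodes, hverts]
    rintro x (hx | ⟨hxs, -⟩)
    · obtain ⟨e, he, hxe⟩ := ((R.isComponent_ctop h0 hs).2.1 hx).1
      exact ⟨⟨e, he⟩, R.descends_of_inter_ctop_nonempty h0 hs ⟨x, hxe, hx⟩, hxe⟩
    · exact ⟨s, .refl, hxs⟩

lemma eq_ctop_of_subtreeNodes_eq (hs : s ≠ h0) {C : Set α}
    (hC : H.IsComponent (R.parent h0 s).1 C)
    (h : (R.joinTree h0).subtreeNodes (R.parent h0 s) s = C ∪ (s.1 ∩ (R.parent h0 s).1)) :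
    C = R.ctop h0 s := by
  rw [R.subtreeNodes_joinTree h0 hs] at h
  have hcancel : ∀ D, H.IsComponent (R.parent h0 s).1 D →
      D = (D ∪ (s.1 ∩ (R.parent h0 s).1)) \ (R.parent h0 s).1 := fun D hD => by
    rw [Set.union_sdiff_distrib, Set.sdiff_eq_empty.2 Set.inter_subset_right, Set.union_empty,
      (Set.disjoint_left.2 fun x hx => hD.not_mem hx).sdiff_eq_left]
  rw [hcancel C hC, hcancel _ (R.isComponent_ctop h0 hs), h]

lemma eq_ctop_of_ctopAt {r : Hyperedge H} {C : Set α} (h : CtopAt H (R.joinTree h0) h0 r C) :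
    r = h0 ∨ C = R.ctop h0 r := by
  rcases h with ⟨hr, -⟩ | ⟨p, hchild, hC, hsub⟩
  · exact Or.inl hr
  · obtain ⟨hr, rfl⟩ := (R.isChild_joinTree_iff h0).1 hchild
    exact Or.inr (R.eq_ctop_of_subtreeNodes_eq h0 hr hC hsub)

lemma subtreeNodes_eq_component_of_isChild {r : Hyperedge H}
    (hchild : (R.joinTree h0).IsChild h0 r s) :
    (∃! C : Set α, H.IsComponent r.1 C ∧
      (R.joinTree h0).subtreeNodes r s = C ∪ (s.1 ∩ r.1)) ∧
    ∀ C : Set α, H.IsComponent r.1 C →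
      (R.joinTree h0).subtreeNodes r s = C ∪ (s.1 ∩ r.1) →
        ((s.1 : Set α) ∩ C).Nonempty ∧ (s.1 : Set α) ⊆ H.Fr C := by
  obtain ⟨hs, rfl⟩ := (R.isChild_joinTree_iff h0).1 hchild
  refine ⟨⟨R.ctop h0 s, ⟨R.isComponent_ctop h0 hs, R.subtreeNodes_joinTree h0 hs⟩,
    fun C ⟨hC, h⟩ => R.eq_ctop_of_subtreeNodes_eq h0 hs hC h⟩, fun C hC h => ?_⟩
  obtain rfl := R.eq_ctop_of_subtreeNodes_eq h0 hs hC h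
  obtain ⟨y, hys, hyC⟩ := R.rep_ctop h0 hs ▸ R.rep_inter_nonempty _ _ hC
  exact ⟨⟨y, hys, hyC⟩, fun x hx => mem_fr s.2 hx hys hyC⟩

lemma existsUnique_child_joinTree {r : Hyperedge H} {Ctop C : Set α}
    (hCtop : CtopAt H (R.joinTree h0) h0 r Ctop) (hC : H.IsComponent r.1 C) (hCsub : C ⊆ Ctop) :
    ∃! s, (R.joinTree h0).IsChild h0 r s ∧
      (R.joinTree h0).subtreeNodes r s = C ∪ (s.1 ∩ r.1) := by
  have hCr : r = h0 ∨ C ⊆ R.ctop h0 r :=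
    (R.eq_ctop_of_ctopAt h0 hCtop).imp_right fun h => by rwa [← h]
  obtain ⟨hs, hpar, hctop⟩ := R.parent_rep h0 hC hCr
  refine ⟨R.rep r C, ⟨(R.isChild_joinTree_iff h0).2 ⟨hs, hpar⟩, ?_⟩, ?_⟩
  · simpa only [hpar, hctop] using R.subtreeNodes_joinTree h0 hs
  · rintro s' ⟨hchild, h⟩
    obtain ⟨hs', rfl⟩ := (R.isChild_joinTree_iff h0).1 hchild
    have := R.rep_ctop h0 hs'
    rw [← R.eq_ctop_of_subtreeNodes_eq h0 hs' hC h] at this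
    exact this.symm

lemma isComponentTreeFor_joinTree : (R.joinTree h0).IsComponentTreeFor H h0 :=
  ⟨fun _ _ hchild => R.subtreeNodes_eq_component_of_isChild h0 hchild,
    fun _ _ hCtop _ hC hCsub => R.existsUnique_child_joinTree h0 hCtop hC hCsub⟩

end Rooted

end RepSystem

end FinHypergraph

theorem reduced_acyclic_has_component_tree {α : Type*} (Ha : FinHypergraph α)
    (hred : Ha.Reduced) (hacyc : Ha.Acyclic) :
    ∀ h : Finset α, ∀ hh : h ∈ Ha.edges,
      ∃ JT : JoinTree Ha, JT.IsComponentTreeFor Ha ⟨h, hh⟩ := by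
  intro h hh
  obtain ⟨R⟩ := hacyc.nonempty_repSystem hred
  exact ⟨R.joinTree ⟨h, hh⟩, R.isComponentTreeFor_joinTree ⟨h, hh⟩⟩
end
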